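/- arXiv:2204.10833 — 4 statements merged into one kernel-verified Lean document; each statement's English description precedes it below -/
import Mathlib

section
/- Let g₀ : S¹ → ℝ² be a continuous map from the unit circle S¹ = {x ∈ ℝ² : ‖x‖ = 1} to ℝ², and let η > 0. Then there exists a continuous map g : S¹ → ℝ² such that ‖g(s)‖ < η and g(s) ≠ g₀(s) for every s ∈ S¹. -/
/-!
Approximate `g₀` within `η / 2` on the circle by a smooth map `P : ℝ² → ℝ²` (Stone–Weierstrass,
one coordinate at a time). The image of the circle under `P` is the range of a `C¹` curve, so it
has Hausdorff dimension at most `1` and its complement in `ℝ²` is dense: pick `c` off it with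
`‖c‖ < η / 2`. Then `g = g₀ - P + c` has norm `< η`, and `g - g₀ = c - P` never vanishes.
-/

open Set Metric Module
open scoped ContDiff

section SmoothApproximation

variable {E F : Type*} [NormedAddCommGroup E] [NormedSpace ℝ E]
  [NormedAddCommGroup F] [NormedSpace ℝ F]

def smoothFunctions (K : Set E) : Subalgebra ℝ C(K, ℝ) where
  carrier := {f | ∃ G : E → ℝ, ContDiff ℝ ∞ G ∧ ∀ x : K, G x = f x}
  mul_mem' := by
    rintro f g ⟨F, hF, hFf⟩ ⟨G, hG, hGg⟩
    exact ⟨F * G, hF.mul hG, fun x => by simp [hFf, hGg]⟩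
  add_mem' := by
    rintro f g ⟨F, hF, hFf⟩ ⟨G, hG, hGg⟩
    exact ⟨F + G, hF.add hG, fun x => by simp [hFf, hGg]⟩
  algebraMap_mem' r := ⟨fun _ => r, contDiff_const, fun _ => rfl⟩

theorem smoothFunctions_separatesPoints (K : Set E) : (smoothFunctions K).SeparatesPoints := by
  intro x y hxy
  obtain ⟨ℓ, hℓ⟩ := SeparatingDual.exists_separating_of_ne (R := ℝ) (Subtype.coe_ne_coe.2 hxy)
  exact ⟨_, ⟨⟨fun x => ℓ x, by fun_prop⟩, ⟨ℓ, ℓ.contDiff, fun _ => rfl⟩, rfl⟩, hℓ⟩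

theorem exists_contDiff_near [FiniteDimensional ℝ F] {K : Set E} [CompactSpace K] (f : C(K, F))
    {ε : ℝ} (hε : 0 < ε) : ∃ P : E → F, ContDiff ℝ ∞ P ∧ ∀ x : K, ‖P x - f x‖ < ε := by
  let e := (Module.finBasis ℝ F).equivFunL
  set C := ‖(e.symm : (Fin (finrank ℝ F) → ℝ) →L[ℝ] F)‖
  have hδ : 0 < ε / (C + 1) := by positivity
  have hcoord : ∀ i, ∃ G : E → ℝ, ContDiff ℝ ∞ G ∧ ∀ x : K, ‖G x - e (f x) i‖ < ε / (C + 1) := by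
    intro i
    obtain ⟨⟨g, G, hG, hGg⟩, hg⟩ :=
      ContinuousMap.exists_mem_subalgebra_near_continuous_of_separatesPoints (smoothFunctions K)
        (smoothFunctions_separatesPoints K) (fun x => e (f x) i) (by fun_prop) _ hδ
    exact ⟨G, hG, fun x => (hGg x).symm ▸ hg x⟩
  choose G hG hGf using hcoord
  refine ⟨fun x => e.symm fun i => G i x, e.symm.contDiff.comp (contDiff_pi.2 hG), fun x => ?_⟩
  calc ‖e.symm (fun i => G i x) - f x‖ = ‖e.symm ((fun i => G i x) - e (f x))‖ := by simp
    _ ≤ C * ‖(fun i => G i x) - e (f x)‖ := e.symm.toContinuousLinearMap.le_opNorm _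
    _ ≤ C * (ε / (C + 1)) := by
        gcongr
        exact ((pi_norm_lt_iff hδ).2 fun i => hGf i x).le
    _ < ε := by
        rw [mul_div_assoc', div_lt_iff₀ (by positivity)]
        nlinarith

end SmoothApproximation

theorem range_repr_exp_mul_I :
    range (fun t : ℝ => Complex.orthonormalBasisOneI.repr (Complex.exp (t * Complex.I))) =
      sphere 0 1 := by
  rw [range_comp', Complex.range_exp_mul_I, LinearIsometryEquiv.image_sphere, map_zero]

theorem dense_compl_image_sphere {F : Type*} [NormedAddCommGroup F] [NormedSpace ℝ F]
    [FiniteDimensional ℝ F] {P : EuclideanSpace ℝ (Fin 2) → F} (hP : ContDiff ℝ 1 P)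
    (hF : 1 < finrank ℝ F) : Dense (P '' sphere 0 1)ᶜ := by
  rw [← range_repr_exp_mul_I, ← range_comp]
  refine ContDiff.dense_compl_range_of_finrank_lt_finrank (hP.comp ?_) (by simpa using hF)
  exact Complex.orthonormalBasisOneI.repr.contDiff.comp <|
    Complex.contDiff_exp.comp <| Complex.ofRealCLM.contDiff.mul contDiff_const

/-- A continuous obstruction function `g₀ : S¹ → ℝ²` can be avoided by an
arbitrarily small continuous perturbation: for any `η > 0` there is a
continuous `g : S¹ → ℝ²` with `‖g s‖ < η` and `g s ≠ g₀ s` for all `s`. -/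
theorem exists_small_avoiding_map
    (g₀ : C((Metric.sphere (0 : EuclideanSpace ℝ (Fin 2)) 1 : Set (EuclideanSpace ℝ (Fin 2))),
        EuclideanSpace ℝ (Fin 2)))
    (η : ℝ) (hη : 0 < η) :
    ∃ g : C((Metric.sphere (0 : EuclideanSpace ℝ (Fin 2)) 1 : Set (EuclideanSpace ℝ (Fin 2))),
        EuclideanSpace ℝ (Fin 2)),
      ∀ s, ‖g s‖ < η ∧ g s ≠ g₀ s := by
  obtain ⟨P, hP, hPg⟩ := exists_contDiff_near g₀ (half_pos hη)
  obtain ⟨c, hcP, hc⟩ := (dense_compl_image_sphere (hP.of_le (by simp))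
    (by simp)).exists_mem_open isOpen_ball (nonempty_ball.2 (half_pos hη))
  refine ⟨⟨fun s => g₀ s - P s + c, by fun_prop⟩, fun s => ⟨?_, ?_⟩⟩
  · calc ‖g₀ s - P s + c‖ ≤ ‖P s - g₀ s‖ + ‖c‖ := by rw [← norm_sub_rev]; exact norm_add_le _ _
      _ < η / 2 + η / 2 := add_lt_add (hPg s) (mem_ball_zero_iff.1 hc)
      _ = η := add_halves η
  · intro hs
    have hcs : c = P s := by simpa [sub_add_eq_add_sub, sub_eq_iff_eq_add] using hs
    exact hcP ⟨s, s.2, hcs.symm⟩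
end

section
/- Let D and D_n (n ∈ ℕ) be compact convex subsets of ℝ² with nonempty interiors, and suppose the Hausdorff distance between D_n and D tends to 0 as n → ∞. Then the Hausdorff distance between the frontier of D_n and the frontier of D tends to 0 as n → ∞. -/
/-!
Let `h` be the Hausdorff distance of the compact convex sets `A` and `B`, and `x ∈ ∂A`.
If `x ∉ B`, the nearest point of `B` lies on `∂B`, so `dist(x, ∂B) ≤ dist(x, B) ≤ h`.
If `x ∈ B`, the ball of radius `r = dist(x, ∂B)` about `x` is connected and misses `∂B`,
so it lies in `B`, hence within `h` of `A`. Pushing a point outside the convex set `A` away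
from its nearest point increases its distance to `A` by the length of the push; so if `r > h`,
every point near `x` lies in `A`, contradicting `x ∈ ∂A`. Thus `d_H(∂A, ∂B) ≤ d_H(A, B)`.
-/

open Filter Metric Set

theorem IsPreconnected.subset_interior_of_disjoint_frontier {X : Type*} [TopologicalSpace X]
    {s t : Set X} (hs : IsPreconnected s) (hst : Disjoint s (frontier t))
    (hne : (s ∩ t).Nonempty) : s ⊆ interior t := by
  have hnotFrontier : ∀ z ∈ s, z ∈ closure t → z ∈ interior t := fun z hz hzt => by
    by_contra hzi
    exact hst.notMem_of_mem_left hz ⟨hzt, hzi⟩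
  obtain ⟨x, hxs, hxt⟩ := hne
  refine hs.subset_of_closure_inter_subset isOpen_interior
    ⟨x, hxs, hnotFrontier x hxs (subset_closure hxt)⟩ ?_
  rintro z ⟨hzc, hzs⟩
  exact hnotFrontier z hzs (closure_mono interior_subset hzc)

theorem Metric.infDist_eq_iInf_norm {E : Type*} [SeminormedAddCommGroup E] (x : E) (A : Set E) :
    infDist x A = ⨅ w : A, ‖x - w‖ := by
  simp only [infDist_eq_iInf, dist_eq_norm]

section NormedSpace

variable {E : Type*} [NormedAddCommGroup E] [NormedSpace ℝ E]

theorem Metric.ball_infDist_frontier_subset {s : Set E} {x : E} (hx : x ∈ s) :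
    ball x (infDist x (frontier s)) ⊆ s := by
  intro y hy
  have hx' : x ∈ ball x (infDist x (frontier s)) := mem_ball_self (dist_nonneg.trans_lt hy)
  exact interior_subset <| isPreconnected_ball.subset_interior_of_disjoint_frontier
    disjoint_ball_infDist ⟨x, hx', hx⟩ hy

theorem Metric.infDist_frontier_le_infDist_of_notMem {s : Set E} {x : E} (hx : x ∉ s) :
    infDist x (frontier s) ≤ infDist x s := by
  rcases s.eq_empty_or_nonempty with rfl | hs
  · simp
  by_contra! hlt
  obtain ⟨y, hys, hy⟩ := (infDist_lt_iff hs).mp hlt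
  have hball : ball x (infDist x (frontier s)) ⊆ sᶜ := by
    simpa only [frontier_compl] using ball_infDist_frontier_subset (s := sᶜ) hx
  exact hball (mem_ball'.mpr hy) hys

end NormedSpace

section InnerProductSpace

variable {E : Type*} [NormedAddCommGroup E] [InnerProductSpace ℝ E] {A : Set E}

/-- `p` stays the nearest point: the obtuse-angle criterion for `x` scales to `p + s • (x - p)`. -/
theorem Convex.infDist_add_smul_sub_eq (hA : Convex ℝ A) {x p : E} (hp : p ∈ A)
    (hxp : infDist x A = dist x p) {s : ℝ} (hs : 0 ≤ s) :
    infDist (p + s • (x - p)) A = s * dist x p := by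
  rw [infDist_eq_iInf_norm, dist_eq_norm] at hxp
  have hobtuse := (norm_eq_iInf_iff_real_inner_le_zero hA hp).mp hxp.symm
  have hnearest : ‖p + s • (x - p) - p‖ = ⨅ w : A, ‖p + s • (x - p) - w‖ := by
    refine (norm_eq_iInf_iff_real_inner_le_zero hA hp).mpr fun w hw => ?_
    rw [add_sub_cancel_left, real_inner_smul_left]
    exact mul_nonpos_of_nonneg_of_nonpos hs (hobtuse w hw)
  rw [infDist_eq_iInf_norm, ← hnearest, add_sub_cancel_left, norm_smul, Real.norm_of_nonneg hs,
    dist_eq_norm]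

theorem Convex.mem_of_infDist_le_on_ball (hA : Convex ℝ A) (hAc : IsComplete A)
    (hAne : A.Nonempty) {x : E} {ε δ : ℝ} (hε : 0 ≤ ε) (hεδ : ε < δ)
    (hnear : ∀ y ∈ ball x δ, infDist y A ≤ ε) : x ∈ A := by
  by_contra hxA
  obtain ⟨p, hp, hxp⟩ := exists_norm_eq_iInf_of_complete_convex hAne hAc hA x
  rw [← infDist_eq_iInf_norm, ← dist_eq_norm] at hxp
  set μ := dist x p
  have hμ : 0 < μ := dist_pos.mpr fun h => hxA (h ▸ hp)
  obtain ⟨t, hεt, htδ⟩ := exists_between hεδ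
  have ht : 0 ≤ t := hε.trans hεt.le
  -- push `x` a distance `t` further away from `p`: still in the ball, but farther than `ε` from `A`
  have hs : 0 ≤ (μ + t) / μ := by positivity
  have hq : p + ((μ + t) / μ) • (x - p) - x = (t / μ) • (x - p) := by
    rw [add_div, div_self hμ.ne', add_smul, one_smul]; abel
  have hqball : p + ((μ + t) / μ) • (x - p) ∈ ball x δ := by
    rw [mem_ball, dist_eq_norm, hq, norm_smul, Real.norm_of_nonneg (by positivity), ← dist_eq_norm,
      div_mul_cancel₀ _ hμ.ne']
    linarith
  have hfar := hA.infDist_add_smul_sub_eq hp hxp.symm hs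
  rw [div_mul_cancel₀ _ hμ.ne'] at hfar
  linarith [hnear _ hqball]

theorem Convex.mem_interior_of_infDist_le_on_ball (hA : Convex ℝ A) (hAc : IsComplete A)
    (hAne : A.Nonempty) {x : E} {ε δ : ℝ} (hε : 0 ≤ ε) (hεδ : ε < δ)
    (hnear : ∀ y ∈ ball x δ, infDist y A ≤ ε) : x ∈ interior A := by
  refine mem_interior.mpr ⟨ball x ((δ - ε) / 2), fun x' hx' => ?_, isOpen_ball,
    mem_ball_self (by linarith)⟩
  refine hA.mem_of_infDist_le_on_ball hAc hAne hε (δ := (δ + ε) / 2) (by linarith)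
    fun y hy => hnear y ?_
  calc dist y x ≤ dist y x' + dist x' x := dist_triangle _ _ _
    _ < (δ + ε) / 2 + (δ - ε) / 2 := add_lt_add (mem_ball.mp hy) (mem_ball.mp hx')
    _ = δ := by ring

theorem Convex.infDist_frontier_le_hausdorffDist (hA : Convex ℝ A) (hAc : IsComplete A)
    (hAb : Bornology.IsBounded A) {B : Set E} (hBb : Bornology.IsBounded B) {x : E}
    (hx : x ∈ frontier A) : infDist x (frontier B) ≤ hausdorffDist A B := by
  have hxA : x ∈ A := hAc.isClosed.frontier_subset hx
  rcases B.eq_empty_or_nonempty with rfl | hBne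
  · simp
  have hfin : hausdorffEDist A B ≠ ⊤ :=
    hausdorffEDist_ne_top_of_nonempty_of_bounded ⟨x, hxA⟩ hBne hAb hBb
  by_cases hxB : x ∈ B
  · by_contra! hlt
    have hnear : ∀ y ∈ ball x (infDist x (frontier B)), infDist y A ≤ hausdorffDist A B :=
      fun y hy => hausdorffDist_comm (s := A) ▸ infDist_le_hausdorffDist_of_mem
        (ball_infDist_frontier_subset hxB hy) (by rwa [hausdorffEDist_comm])
    exact hx.2 <| hA.mem_interior_of_infDist_le_on_ball hAc ⟨x, hxA⟩ hausdorffDist_nonneg hlt hnear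
  · calc infDist x (frontier B) ≤ infDist x B := infDist_frontier_le_infDist_of_notMem hxB
      _ ≤ hausdorffDist A B := infDist_le_hausdorffDist_of_mem hxA hfin

theorem Convex.hausdorffDist_frontier_le {B : Set E} (hA : Convex ℝ A) (hAc : IsComplete A)
    (hAb : Bornology.IsBounded A) (hB : Convex ℝ B) (hBc : IsComplete B)
    (hBb : Bornology.IsBounded B) :
    hausdorffDist (frontier A) (frontier B) ≤ hausdorffDist A B :=
  hausdorffDist_le_of_infDist hausdorffDist_nonneg
    (fun _ hx => hA.infDist_frontier_le_hausdorffDist hAc hAb hBb hx)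
    (fun _ hx => hausdorffDist_comm (s := A) ▸ hB.infDist_frontier_le_hausdorffDist hBc hBb hAb hx)

end InnerProductSpace

theorem frontier_hausdorff_continuous_general
    (D : Set (EuclideanSpace ℝ (Fin 2))) (Dn : ℕ → Set (EuclideanSpace ℝ (Fin 2)))
    (hD : IsCompact D) (hDconv : Convex ℝ D)
    (hDn : ∀ n, IsCompact (Dn n)) (hDnconv : ∀ n, Convex ℝ (Dn n))
    (hconv : Tendsto (fun n => Metric.hausdorffDist (Dn n) D) atTop (nhds 0)) :
    Tendsto (fun n => Metric.hausdorffDist (frontier (Dn n)) (frontier D)) atTop (nhds 0) :=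
  squeeze_zero (fun _ => hausdorffDist_nonneg)
    (fun n => (hDnconv n).hausdorffDist_frontier_le (hDn n).isComplete (hDn n).isBounded hDconv
      hD.isComplete hD.isBounded) hconv

/-- If compact convex planar sets with nonempty interior converge in Hausdorff
distance, then their frontiers converge in Hausdorff distance. -/
theorem frontier_hausdorff_continuous
    (D : Set (EuclideanSpace ℝ (Fin 2))) (Dn : ℕ → Set (EuclideanSpace ℝ (Fin 2)))
    (hD : IsCompact D) (hDconv : Convex ℝ D) (hDint : (interior D).Nonempty)
    (hDn : ∀ n, IsCompact (Dn n)) (hDnconv : ∀ n, Convex ℝ (Dn n))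
    (hDnint : ∀ n, (interior (Dn n)).Nonempty)
    (hconv : Tendsto (fun n => Metric.hausdorffDist (Dn n) D) atTop (nhds 0)) :
    Tendsto (fun n => Metric.hausdorffDist (frontier (Dn n)) (frontier D)) atTop (nhds 0) :=
  frontier_hausdorff_continuous_general D Dn hD hDconv hDn hDnconv hconv
end

section
/- Let D and D_n (n ∈ ℕ) be compact convex subsets of ℝ² with nonempty interiors, and suppose the Hausdorff distance between D_n and D tends to 0 as n → ∞. Let b(C) denote the unique minimizer over C of the functional E_C(x) = ∫_C ‖x − y‖² dy for a compact convex set C with nonempty interior. Then b(D_n) → b(D) as n → ∞. -/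
/-!
By the parallel-axis identity `∫_C ‖x - y‖² = |C| ‖x - c‖² + ∫_C ‖c - y‖²`, where `c` is the
centroid of `C`, the minimizer of `E_C` over a convex body `C` is its centroid. If `Dₙ → D` in
Hausdorff distance, then off the frontier of `D` (a null set, as `D` is convex) membership in `Dₙ`
eventually agrees with membership in `D`: a point outside `closure D` is far from `D`, and a point
of `interior D` lies in every convex `Dₙ` close enough to `D`, since otherwise the half-space
separating it from `Dₙ` would contain points of `D` far from `Dₙ`. By dominated convergence the
volumes and first moments of `Dₙ` converge to those of `D`, hence so do the centroids.
-/

open Filter MeasureTheory Metric Set Topology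
open scoped RealInnerProductSpace ENNReal

section SetIntegral

variable {α E ι : Type*} [MeasurableSpace α] {μ : Measure α} [NormedAddCommGroup E]
  [NormedSpace ℝ E] {l : Filter ι} [l.IsCountablyGenerated] {s : ι → Set α} {t K : Set α}

theorem tendsto_setIntegral_of_ae_eventually_mem_iff {g : α → E}
    (hs : ∀ i, MeasurableSet (s i)) (ht : MeasurableSet t) (hK : MeasurableSet K)
    (hsK : ∀ᶠ i in l, s i ⊆ K) (hg : AEStronglyMeasurable g μ) (hgK : IntegrableOn g K μ)
    (hst : ∀ᵐ a ∂μ, ∀ᶠ i in l, a ∈ s i ↔ a ∈ t) :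
    Tendsto (fun i => ∫ a in s i, g a ∂μ) l (𝓝 (∫ a in t, g a ∂μ)) := by
  simp only [← integral_indicator (hs _), ← integral_indicator ht]
  refine tendsto_integral_filter_of_dominated_convergence (K.indicator fun a => ‖g a‖)
    (.of_forall fun i => hg.indicator (hs i)) ?_ ((integrable_indicator_iff hK).2 hgK.norm) ?_
  · filter_upwards [hsK] with i hi
    exact ae_of_all _ fun a => (norm_indicator_le_of_subset hi g a).trans_eq
      (norm_indicator_eq_indicator_norm g a)
  · filter_upwards [hst] with a ha
    exact tendsto_const_nhds.congr' (ha.mono fun i hi => indicator_eq_indicator hi.symm rfl)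

theorem tendsto_measureReal_of_ae_eventually_mem_iff (hs : ∀ i, MeasurableSet (s i))
    (ht : MeasurableSet t) (hK : MeasurableSet K) (hKfin : μ K ≠ ∞)
    (hsK : ∀ᶠ i in l, s i ⊆ K) (hst : ∀ᵐ a ∂μ, ∀ᶠ i in l, a ∈ s i ↔ a ∈ t) :
    Tendsto (fun i => μ.real (s i)) l (𝓝 (μ.real t)) := by
  simpa only [setIntegral_const, smul_eq_mul, mul_one] using
    tendsto_setIntegral_of_ae_eventually_mem_iff (g := fun _ => (1 : ℝ)) hs ht hK hsK
      aestronglyMeasurable_const (integrableOn_const hKfin) hst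

theorem tendsto_setAverage_of_ae_eventually_mem_iff {g : α → E}
    (hs : ∀ i, MeasurableSet (s i)) (ht : MeasurableSet t) (ht0 : μ t ≠ 0)
    (htfin : μ t ≠ ∞) (hK : MeasurableSet K) (hKfin : μ K ≠ ∞) (hsK : ∀ᶠ i in l, s i ⊆ K)
    (hg : AEStronglyMeasurable g μ) (hgK : IntegrableOn g K μ)
    (hst : ∀ᵐ a ∂μ, ∀ᶠ i in l, a ∈ s i ↔ a ∈ t) :
    Tendsto (fun i => ⨍ a in s i, g a ∂μ) l (𝓝 (⨍ a in t, g a ∂μ)) := by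
  simp only [setAverage_eq]
  exact ((tendsto_measureReal_of_ae_eventually_mem_iff hs ht hK hKfin hsK hst).inv₀
    ((measureReal_ne_zero_iff htfin).2 ht0)).smul
    (tendsto_setIntegral_of_ae_eventually_mem_iff hs ht hK hsK hg hgK hst)

end SetIntegral

section Hausdorff

theorem mem_of_closedBall_subset_of_hausdorffDist_lt {F : Type*} [NormedAddCommGroup F]
    [InnerProductSpace ℝ F] {C D : Set F} (hC : IsComplete C) (hCc : Convex ℝ C)
    (hfin : hausdorffEDist C D ≠ ⊤) {x : F} {r : ℝ} (hball : closedBall x r ⊆ D)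
    (hH : hausdorffDist C D < r) : x ∈ C := by
  by_contra hx
  have hr : 0 < r := hausdorffDist_nonneg.trans_lt hH
  have hfin' : hausdorffEDist D C ≠ ⊤ := hausdorffEDist_comm (s := C) ▸ hfin
  have hxD : x ∈ D := hball (mem_closedBall_self hr.le)
  have hCne : C.Nonempty := nonempty_of_hausdorffEDist_ne_top ⟨x, hxD⟩ hfin'
  obtain ⟨p, hp, hnorm⟩ := exists_norm_eq_iInf_of_complete_convex hCne hC hCc x
  have hproj : ∀ w ∈ C, ⟪x - p, w - p⟫ ≤ 0 :=
    (norm_eq_iInf_iff_real_inner_le_zero hCc hp).1 hnorm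
  set v := x - p
  have hv : 0 < ‖v‖ := norm_pos_iff.2 (sub_ne_zero.2 fun h => hx (h ▸ hp))
  set z := x + (r / ‖v‖) • v
  have hzx : ‖z - x‖ = r := by
    rw [add_sub_cancel_left, norm_smul, Real.norm_of_nonneg (by positivity)]
    field_simp
  have hzD : z ∈ D := hball (by rw [mem_closedBall, dist_eq_norm, hzx])
  -- `C` lies in the half-space `⟪v, · - p⟫ ≤ 0`, while `z` is at height `‖v‖ + r` above it.
  have hfar : r ≤ infDist z C := (le_infDist hCne).2 fun w hw => by
    have hzw : ⟪v, z - w⟫ = ‖v‖ * (‖v‖ + r) - ⟪v, w - p⟫ := by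
      have : z - w = v + (r / ‖v‖) • v - (w - p) := by simp only [z, v]; abel
      rw [this, inner_sub_right, inner_add_right, real_inner_smul_right,
        real_inner_self_eq_norm_sq]
      field_simp
    have hcs : ⟪v, z - w⟫ ≤ ‖v‖ * dist z w :=
      dist_eq_norm z w ▸ real_inner_le_norm v (z - w)
    have : ‖v‖ * r ≤ ‖v‖ * dist z w := by nlinarith [hproj w hw]
    exact le_of_mul_le_mul_left this hv
  have := infDist_le_hausdorffDist_of_mem hzD hfin'
  rw [hausdorffDist_comm] at this
  linarith

variable {ι : Type*} {l : Filter ι}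

theorem eventually_subset_thickening_of_tendsto_hausdorffDist {α : Type*} [PseudoMetricSpace α]
    {s : ι → Set α} {t : Set α} (hfin : ∀ i, hausdorffEDist (s i) t ≠ ⊤)
    (h : Tendsto (fun i => hausdorffDist (s i) t) l (𝓝 0)) {ε : ℝ} (hε : 0 < ε) :
    ∀ᶠ i in l, s i ⊆ thickening ε t := by
  filter_upwards [h.eventually_lt_const hε] with i hi x hx
  exact mem_thickening_iff.2 (exists_dist_lt_of_hausdorffDist_lt hx hi (hfin i))

theorem eventually_notMem_of_tendsto_hausdorffDist {α : Type*} [PseudoMetricSpace α]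
    {s : ι → Set α} {t : Set α} (hfin : ∀ i, hausdorffEDist (s i) t ≠ ⊤)
    (h : Tendsto (fun i => hausdorffDist (s i) t) l (𝓝 0)) {a : α} (ha : a ∉ closure t) :
    ∀ᶠ i in l, a ∉ s i := by
  obtain ⟨ε, hε, hlt⟩ := exists_real_pos_lt_infEDist_of_notMem_closure ha
  filter_upwards [eventually_subset_thickening_of_tendsto_hausdorffDist hfin h hε] with i hi has
  exact (mem_thickening_iff_infEDist_lt.1 (hi has)).not_gt hlt

variable {F : Type*} [NormedAddCommGroup F] [InnerProductSpace ℝ F] {s : ι → Set F} {t : Set F}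

theorem eventually_mem_of_tendsto_hausdorffDist (hs : ∀ i, IsComplete (s i))
    (hsc : ∀ i, Convex ℝ (s i)) (hfin : ∀ i, hausdorffEDist (s i) t ≠ ⊤)
    (h : Tendsto (fun i => hausdorffDist (s i) t) l (𝓝 0)) {a : F} (ha : a ∈ interior t) :
    ∀ᶠ i in l, a ∈ s i := by
  obtain ⟨r, hr, hball⟩ := nhds_basis_closedBall.mem_iff.1 (mem_interior_iff_mem_nhds.1 ha)
  filter_upwards [h.eventually_lt_const hr] with i hi
  exact mem_of_closedBall_subset_of_hausdorffDist_lt (hs i) (hsc i) (hfin i) hball hi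

theorem ae_eventually_mem_iff_of_tendsto_hausdorffDist [MeasurableSpace F] [BorelSpace F]
    [FiniteDimensional ℝ F] (μ : Measure F) [μ.IsAddHaarMeasure] (hs : ∀ i, IsComplete (s i))
    (hsc : ∀ i, Convex ℝ (s i)) (htc : Convex ℝ t)
    (hfin : ∀ i, hausdorffEDist (s i) t ≠ ⊤)
    (h : Tendsto (fun i => hausdorffDist (s i) t) l (𝓝 0)) :
    ∀ᵐ a ∂μ, ∀ᶠ i in l, a ∈ s i ↔ a ∈ t := by
  filter_upwards [measure_eq_zero_iff_ae_notMem.1 (htc.addHaar_frontier μ)] with a ha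
  by_cases hat : a ∈ interior t
  · filter_upwards [eventually_mem_of_tendsto_hausdorffDist hs hsc hfin h hat] with i hi
    exact iff_of_true hi (interior_subset hat)
  · have hat' : a ∉ closure t := fun hc => ha ⟨hc, hat⟩
    filter_upwards [eventually_notMem_of_tendsto_hausdorffDist hfin h hat'] with i hi
    exact iff_of_false hi fun hat => hat' (subset_closure hat)

end Hausdorff

section Centroid

variable {E : Type*} [NormedAddCommGroup E] [InnerProductSpace ℝ E] [CompleteSpace E]
  [MeasurableSpace E]

theorem integral_norm_sub_sq_eq {ν : Measure E} [IsFiniteMeasure ν]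
    (hid : Integrable (fun y => y) ν) (hsq : Integrable (fun y => ‖y‖ ^ 2) ν) (x : E) :
    ∫ y, ‖x - y‖ ^ 2 ∂ν =
      ν.real univ * ‖x - ⨍ y, y ∂ν‖ ^ 2 + ∫ y, ‖(⨍ y, y ∂ν) - y‖ ^ 2 ∂ν := by
  have expand : ∀ z : E, ∫ y, ‖z - y‖ ^ 2 ∂ν =
      ν.real univ * ‖z‖ ^ 2 - 2 * ⟪z, ∫ y, y ∂ν⟫ + ∫ y, ‖y‖ ^ 2 ∂ν := fun z => by
    have hinner : Integrable (fun y => 2 * ⟪z, y⟫) ν := (hid.const_inner z).const_mul 2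
    have hlin : Integrable (fun y => ‖z‖ ^ 2 - 2 * ⟪z, y⟫) ν :=
      (integrable_const _).sub hinner
    simp only [norm_sub_sq_real]
    rw [integral_add hlin hsq, integral_sub (integrable_const _) hinner,
      integral_const_mul, integral_inner hid, integral_const, smul_eq_mul, mul_comm]
  rw [expand x, expand, ← measure_smul_average, inner_smul_right, inner_smul_right,
    norm_sub_sq_real x, real_inner_self_eq_norm_sq]
  ring

theorem Convex.eq_setAverage_of_isMinOn [OpensMeasurableSpace E] {μ : Measure E} {C : Set E}
    (hCc : Convex ℝ C) (hCcl : IsClosed C) (hC0 : μ C ≠ 0) (hCfin : μ C ≠ ∞)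
    (hid : IntegrableOn (fun y => y) C μ) (hsq : IntegrableOn (fun y => ‖y‖ ^ 2) C μ) {b : E}
    (hmin : IsMinOn (fun x => ∫ y in C, ‖x - y‖ ^ 2 ∂μ) C b) :
    b = ⨍ y in C, y ∂μ := by
  have : IsFiniteMeasure (μ.restrict C) := isFiniteMeasure_restrict.2 hCfin
  set c := ⨍ y in C, y ∂μ
  have hcC : c ∈ C :=
    hCc.set_average_mem hCcl hC0 hCfin (ae_restrict_mem hCcl.measurableSet) hid
  have hV : 0 < μ.real C := ENNReal.toReal_pos hC0 hCfin
  have hle := isMinOn_iff.1 hmin c hcC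
  rw [integral_norm_sub_sq_eq hid hsq b, integral_norm_sub_sq_eq hid hsq c, sub_self, norm_zero,
    measureReal_restrict_apply_univ] at hle
  have hbc : ‖b - c‖ ^ 2 = 0 := le_antisymm (by nlinarith) (sq_nonneg _)
  rwa [sq_eq_zero_iff, norm_eq_zero, sub_eq_zero] at hbc

theorem IsCompact.eq_setAverage_of_isMinOn [OpensMeasurableSpace E] {μ : Measure E}
    [IsFiniteMeasureOnCompacts μ] {C : Set E} (hC : IsCompact C) (hCc : Convex ℝ C)
    (hC0 : μ C ≠ 0) {b : E} (hmin : IsMinOn (fun x => ∫ y in C, ‖x - y‖ ^ 2 ∂μ) C b) :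
    b = ⨍ y in C, y ∂μ :=
  hCc.eq_setAverage_of_isMinOn hC.isClosed hC0 hC.measure_lt_top.ne
    (continuousOn_id.integrableOn_compact hC)
    ((continuous_norm.pow 2).continuousOn.integrableOn_compact hC) hmin

end Centroid

theorem karcher_mean_continuous_general
    (D : Set (EuclideanSpace ℝ (Fin 2))) (Dn : ℕ → Set (EuclideanSpace ℝ (Fin 2)))
    (hD : IsCompact D) (hDconv : Convex ℝ D) (hDint : (interior D).Nonempty)
    (hDn : ∀ n, IsCompact (Dn n)) (hDnconv : ∀ n, Convex ℝ (Dn n))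
    (hconv : Tendsto (fun n => Metric.hausdorffDist (Dn n) D) atTop (nhds 0))
    (b : ℕ → EuclideanSpace ℝ (Fin 2)) (bD : EuclideanSpace ℝ (Fin 2))
    (hb : ∀ n, b n ∈ Dn n ∧
      ∀ x ∈ Dn n, (∫ y in Dn n, ‖b n - y‖ ^ 2) ≤ ∫ y in Dn n, ‖x - y‖ ^ 2)
    (hbD : bD ∈ D ∧ ∀ x ∈ D, (∫ y in D, ‖bD - y‖ ^ 2) ≤ ∫ y in D, ‖x - y‖ ^ 2) :
    Tendsto b atTop (nhds bD) := by
  have hfin : ∀ n, hausdorffEDist (Dn n) D ≠ ⊤ := fun n =>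
    hausdorffEDist_ne_top_of_nonempty_of_bounded ⟨b n, (hb n).1⟩ (hDint.mono interior_subset)
      (hDn n).isBounded hD.isBounded
  have hmem := ae_eventually_mem_iff_of_tendsto_hausdorffDist volume
    (fun n => (hDn n).isComplete) hDnconv hDconv hfin hconv
  have hK : IsCompact (cthickening 1 D) := hD.cthickening
  have hsub : ∀ᶠ n in atTop, Dn n ⊆ cthickening 1 D :=
    (eventually_subset_thickening_of_tendsto_hausdorffDist hfin hconv one_pos).mono
      fun n h => h.trans (thickening_subset_cthickening 1 D)
  have hD0 : volume D ≠ 0 := (Measure.measure_pos_of_nonempty_interior volume hDint).ne'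
  have hvol := tendsto_measureReal_of_ae_eventually_mem_iff (fun n => (hDn n).measurableSet)
    hD.measurableSet hK.measurableSet hK.measure_lt_top.ne hsub hmem
  have havg := tendsto_setAverage_of_ae_eventually_mem_iff (fun n => (hDn n).measurableSet)
    hD.measurableSet hD0 hD.measure_lt_top.ne hK.measurableSet hK.measure_lt_top.ne hsub
    continuous_id.aestronglyMeasurable (continuousOn_id.integrableOn_compact hK) hmem
  rw [hD.eq_setAverage_of_isMinOn hDconv hD0 (isMinOn_iff.2 hbD.2)]
  refine havg.congr' ?_
  filter_upwards [hvol.eventually_ne ((measureReal_ne_zero_iff hD.measure_lt_top.ne).2 hD0)]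
    with n hn
  exact ((hDn n).eq_setAverage_of_isMinOn (hDnconv n) (fun h => hn (by simp [measureReal_def, h]))
    (isMinOn_iff.2 (hb n).2)).symm

/-- Continuity of the Karcher mean: if compact convex planar sets with
nonempty interior converge in Hausdorff distance, then the minimizers over
them of `E_C(x) = ∫_C ‖x - y‖² dy` converge to the minimizer for the limit
set. -/
theorem karcher_mean_continuous
    (D : Set (EuclideanSpace ℝ (Fin 2))) (Dn : ℕ → Set (EuclideanSpace ℝ (Fin 2)))
    (hD : IsCompact D) (hDconv : Convex ℝ D) (hDint : (interior D).Nonempty)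
    (hDn : ∀ n, IsCompact (Dn n)) (hDnconv : ∀ n, Convex ℝ (Dn n))
    (hDnint : ∀ n, (interior (Dn n)).Nonempty)
    (hconv : Tendsto (fun n => Metric.hausdorffDist (Dn n) D) atTop (nhds 0))
    (b : ℕ → EuclideanSpace ℝ (Fin 2)) (bD : EuclideanSpace ℝ (Fin 2))
    (hb : ∀ n, b n ∈ Dn n ∧
      ∀ x ∈ Dn n, (∫ y in Dn n, ‖b n - y‖ ^ 2) ≤ ∫ y in Dn n, ‖x - y‖ ^ 2)
    (hbD : bD ∈ D ∧ ∀ x ∈ D, (∫ y in D, ‖bD - y‖ ^ 2) ≤ ∫ y in D, ‖x - y‖ ^ 2) :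
    Tendsto b atTop (nhds bD) :=
  karcher_mean_continuous_general D Dn hD hDconv hDint hDn hDnconv hconv b bD hb hbD
end

section
/- Let D and D_n (n ∈ ℕ) be compact convex subsets of ℝ². Suppose the Hausdorff distance between D_n and D tends to 0, x_n ∈ interior(D_n) with x_n → x ∈ interior(D), and y_n ∈ D_n with y_n → y ∈ D where y ≠ x. For a compact convex set C, a point p ∈ interior(C), and q ∈ C with q ≠ p, let z(C, p, q) denote the unique point of the frontier of C such that q lies on the segment from p to z(C, p, q). Then z(D_n, x_n, y_n) → z(D, x, y) as n → ∞. -/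
/-!
The points `z n` lie in `Dn n`, hence eventually in the compact set `cthickening 1 D`, so it
suffices that every cluster point `w` of `z` equals `zD`. Pass to a subsequence converging to `w`.
By Hausdorff convergence `w ∈ closure D`. If `w` were interior to `D`, a ball `B(w, R) ⊆ D` would
force (by separating a point outside a closed convex set `C` from it) `B(w, R - d_H(C, D)) ⊆ C`,
so the frontier points `z n` of `Dn n` could not approach `w`; hence `w ∈ frontier D`. The relation
`y ∈ [x -[ℝ] z]` is closed, so `y ∈ [x -[ℝ] w]`, and two frontier points of a convex set on the
same ray from an interior point coincide.
-/

open Filter Metric Topology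
open scoped InnerProductSpace

section Separation

variable {E : Type*} [NormedAddCommGroup E] [InnerProductSpace ℝ E] [CompleteSpace E]

theorem exists_norm_eq_one_inner_lt_of_notMem {C : Set E} (hC : Convex ℝ C) (hCc : IsClosed C)
    (hCne : C.Nonempty) {q : E} (hq : q ∉ C) :
    ∃ v : E, ‖v‖ = 1 ∧ ∀ a ∈ C, ⟪v, a⟫_ℝ < ⟪v, q⟫_ℝ := by
  obtain ⟨f, u, hfC, hfq⟩ := geometric_hahn_banach_closed_point hC hCc hq
  set v := (InnerProductSpace.toDual ℝ E).symm f
  have hv : ∀ a, ⟪v, a⟫_ℝ = f a := fun _ => InnerProductSpace.toDual_symm_apply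
  have hv0 : v ≠ 0 := by
    obtain ⟨a, ha⟩ := hCne
    rintro h
    have := hfC a ha
    simp only [← hv, h, inner_zero_left] at this hfq
    linarith
  refine ⟨‖v‖⁻¹ • v, norm_smul_inv_norm hv0, fun a ha => ?_⟩
  simp only [real_inner_smul_left, hv]
  exact mul_lt_mul_of_pos_left ((hfC a ha).trans hfq) (by positivity)

theorem ball_subset_of_hausdorffDist {C D : Set E} (hC : Convex ℝ C) (hCc : IsClosed C) {w : E}
    {R : ℝ} (hwD : ball w R ⊆ D) (hfin : hausdorffEDist C D ≠ ⊤) :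
    ball w (R - hausdorffDist C D) ⊆ C := by
  intro q hq
  by_contra hqC
  set H := hausdorffDist C D
  set δ := R - H - dist q w
  have hδ : 0 < δ := by rw [mem_ball] at hq; linarith
  have hH : 0 ≤ H := hausdorffDist_nonneg
  have hCne : C.Nonempty := by
    obtain ⟨a, ha, -⟩ := exists_dist_lt_of_hausdorffDist_lt' (hwD (mem_ball_self (by
      linarith [dist_nonneg (x := q) (y := w)]))) (lt_add_one H) hfin
    exact ⟨a, ha⟩
  obtain ⟨v, hv1, hvC⟩ := exists_norm_eq_one_inner_lt_of_notMem hC hCc hCne hqC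
  -- `q'` lies in `D` but, by the choice of `v`, farther than `H` from every point of `C`
  set q' := w + (R - δ / 2) • v
  have hq'D : q' ∈ D := by
    apply hwD
    rw [mem_ball, dist_eq_norm, add_sub_cancel_left, norm_smul, hv1, mul_one, Real.norm_eq_abs,
      abs_of_nonneg (by linarith [dist_nonneg (x := q) (y := w)])]
    linarith
  obtain ⟨a, haC, ha⟩ := exists_dist_lt_of_hausdorffDist_lt' hq'D (lt_add_of_pos_right H
    (half_pos hδ)) hfin
  have hinner : ⟪v, q' - a⟫_ℝ = ⟪v, w - q⟫_ℝ + (R - δ / 2) + (⟪v, q⟫_ℝ - ⟪v, a⟫_ℝ) := by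
    simp only [q', inner_sub_right, inner_add_right, real_inner_smul_right,
      real_inner_self_eq_norm_sq, hv1]
    ring
  have hwq : -dist q w ≤ ⟪v, w - q⟫_ℝ := by
    have := neg_abs_le ⟪v, w - q⟫_ℝ
    have := abs_real_inner_le_norm v (w - q)
    rw [hv1, one_mul, ← dist_eq_norm, dist_comm] at this
    linarith
  have hq'a : ⟪v, q' - a⟫_ℝ ≤ dist q' a := by
    simpa [hv1, dist_eq_norm] using real_inner_le_norm v (q' - a)
  linarith [hvC a haC, dist_comm a q']

end Separation

theorem mem_closure_of_tendsto_hausdorffDist {X ι : Type*} [PseudoMetricSpace X] {l : Filter ι}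
    [l.NeBot] {C : ι → Set X} {D : Set X} {p : ι → X} {w : X}
    (hfin : ∀ i, hausdorffEDist (C i) D ≠ ⊤)
    (hdist : Tendsto (fun i => hausdorffDist (C i) D) l (𝓝 0))
    (hp : ∀ i, p i ∈ C i) (hpw : Tendsto p l (𝓝 w)) : w ∈ closure D := by
  refine Metric.mem_closure_iff.2 fun ε hε => ?_
  obtain ⟨i, hpi, hCi⟩ := ((hpw.eventually (ball_mem_nhds w (half_pos hε))).and
    (hdist.eventually (gt_mem_nhds (half_pos hε)))).exists
  obtain ⟨b, hb, hpb⟩ := exists_dist_lt_of_hausdorffDist_lt (hp i) hCi (hfin i)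
  exact ⟨b, hb, by linarith [dist_triangle w (p i) b, mem_ball'.1 hpi]⟩

theorem notMem_interior_of_tendsto_hausdorffDist {E ι : Type*} [NormedAddCommGroup E]
    [InnerProductSpace ℝ E] [CompleteSpace E] {l : Filter ι} [l.NeBot] {C : ι → Set E}
    {D : Set E} {p : ι → E} {w : E} (hC : ∀ i, Convex ℝ (C i)) (hCc : ∀ i, IsClosed (C i))
    (hfin : ∀ i, hausdorffEDist (C i) D ≠ ⊤)
    (hdist : Tendsto (fun i => hausdorffDist (C i) D) l (𝓝 0))
    (hp : ∀ i, p i ∈ frontier (C i)) (hpw : Tendsto p l (𝓝 w)) : w ∉ interior D := by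
  intro hw
  obtain ⟨R, hR, hwD⟩ := Metric.mem_nhds_iff.1 (mem_interior_iff_mem_nhds.1 hw)
  obtain ⟨i, hpi, hCi⟩ := ((hpw.eventually (ball_mem_nhds w (half_pos hR))).and
    (hdist.eventually (gt_mem_nhds (half_pos hR)))).exists
  have hball : ball w (R - hausdorffDist (C i) D) ⊆ interior (C i) :=
    interior_maximal (ball_subset_of_hausdorffDist (hC i) (hCc i) hwD (hfin i)) isOpen_ball
  exact (hp i).2 (hball (by rw [mem_ball]; linarith [mem_ball.1 hpi]))

-- In a strictly convex space, `y ∈ [x -[ℝ] z]` iff `dist x y + dist y z = dist x z`.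
theorem isClosed_setOf_mem_segment {E : Type*} [NormedAddCommGroup E] [NormedSpace ℝ E]
    [StrictConvexSpace ℝ E] : IsClosed {t : E × E × E | t.2.1 ∈ segment ℝ t.1 t.2.2} := by
  simp_rw [mem_segment_iff_wbtw, ← dist_add_dist_eq_iff]
  exact isClosed_eq (by fun_prop) (by fun_prop)

theorem Convex.eq_of_mem_segment_of_mem_frontier {E : Type*} [AddCommGroup E] [Module ℝ E]
    [TopologicalSpace E] [IsTopologicalAddGroup E] [ContinuousSMul ℝ E] {D : Set E}
    (hD : Convex ℝ D) {x y p q : E} (hx : x ∈ interior D) (hyx : y ≠ x) (hp : p ∈ frontier D)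
    (hq : q ∈ frontier D) (hyp : y ∈ segment ℝ x p) (hyq : y ∈ segment ℝ x q) : p = q := by
  have of_wbtw : ∀ {p q}, p ∈ frontier D → q ∈ frontier D → Wbtw ℝ x p q → p = q := by
    intro p q hp hq hxpq
    by_contra hpq
    have hxp : x ≠ p := fun h => hp.2 (h ▸ hx)
    exact hp.2 (hD.openSegment_interior_closure_subset_interior hx hq.1
      (mem_openSegment_of_ne_left_right hxp (Ne.symm hpq) (mem_segment_iff_wbtw.2 hxpq)))
  have hray : SameRay ℝ (p -ᵥ x) (q -ᵥ x) :=
    ((mem_segment_iff_wbtw.1 hyp).sameRay_vsub_left.symm.trans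
      (mem_segment_iff_wbtw.1 hyq).sameRay_vsub_left fun h => absurd (sub_eq_zero.1 h) hyx)
  rcases wbtw_total_of_sameRay_vsub_left hray with h | h
  · exact of_wbtw hp hq h
  · exact (of_wbtw hq hp h).symm

theorem radial_projection_continuous_general
    (D : Set (EuclideanSpace ℝ (Fin 2))) (Dn : ℕ → Set (EuclideanSpace ℝ (Fin 2)))
    (hD : IsCompact D) (hDconv : Convex ℝ D)
    (hDn : ∀ n, IsCompact (Dn n)) (hDnconv : ∀ n, Convex ℝ (Dn n))
    (hconv : Tendsto (fun n => Metric.hausdorffDist (Dn n) D) atTop (nhds 0))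
    (x : EuclideanSpace ℝ (Fin 2)) (xn : ℕ → EuclideanSpace ℝ (Fin 2))
    (hx : x ∈ interior D)
    (hxconv : Tendsto xn atTop (nhds x))
    (y : EuclideanSpace ℝ (Fin 2)) (yn : ℕ → EuclideanSpace ℝ (Fin 2))
    (hyconv : Tendsto yn atTop (nhds y)) (hne : y ≠ x)
    (z : ℕ → EuclideanSpace ℝ (Fin 2)) (zD : EuclideanSpace ℝ (Fin 2))
    (hz : ∀ n, z n ∈ frontier (Dn n) ∧ yn n ∈ segment ℝ (xn n) (z n))
    (hzD : zD ∈ frontier D ∧ y ∈ segment ℝ x zD) :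
    Tendsto z atTop (nhds zD) := by
  have hzDn n : z n ∈ Dn n := (hDn n).isClosed.frontier_subset (hz n).1
  have hfin n : hausdorffEDist (Dn n) D ≠ ⊤ :=
    hausdorffEDist_ne_top_of_nonempty_of_bounded ⟨z n, hzDn n⟩ ⟨x, interior_subset hx⟩
      (hDn n).isBounded hD.isBounded
  have hz_near : ∀ᶠ n in atTop, z n ∈ cthickening 1 D := by
    filter_upwards [hconv.eventually (gt_mem_nhds one_pos)] with n hn
    exact thickening_subset_cthickening 1 D
      (mem_thickening_iff.2 (exists_dist_lt_of_hausdorffDist_lt (hzDn n) hn (hfin n)))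
  refine hD.cthickening.tendsto_nhds_of_unique_mapClusterPt hz_near fun w _ hw => ?_
  obtain ⟨ψ, hψ, hzψ⟩ := hw.tendsto_subseq
  have hψ_top := hψ.tendsto_atTop
  have hw_frontier : w ∈ frontier D :=
    ⟨mem_closure_of_tendsto_hausdorffDist (fun n => hfin (ψ n)) (hconv.comp hψ_top)
        (fun n => hzDn (ψ n)) hzψ,
      notMem_interior_of_tendsto_hausdorffDist (fun n => hDnconv (ψ n))
        (fun n => (hDn (ψ n)).isClosed) (fun n => hfin (ψ n)) (hconv.comp hψ_top)
        (fun n => (hz (ψ n)).1) hzψ⟩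
  have hyw : y ∈ segment ℝ x w :=
    isClosed_setOf_mem_segment.mem_of_tendsto
      ((hxconv.comp hψ_top).prodMk_nhds ((hyconv.comp hψ_top).prodMk_nhds hzψ))
      (Eventually.of_forall fun n => (hz (ψ n)).2)
  exact hDconv.eq_of_mem_segment_of_mem_frontier hx hne hw_frontier hzD.1 hyw hzD.2

/-- Continuity of the radial projection to the boundary: if compact convex
planar sets `Dₙ` converge to `D` in Hausdorff distance, `xₙ ∈ interior Dₙ`
converge to `x ∈ interior D`, and `yₙ ∈ Dₙ` converge to `y ∈ D` with `y ≠ x`,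
then the radial projections `z(Dₙ, xₙ, yₙ)` (the unique frontier points `zₙ`
of `Dₙ` with `yₙ ∈ [xₙ, zₙ]`) converge to the radial projection `z(D, x, y)`. -/
theorem radial_projection_continuous
    (D : Set (EuclideanSpace ℝ (Fin 2))) (Dn : ℕ → Set (EuclideanSpace ℝ (Fin 2)))
    (hD : IsCompact D) (hDconv : Convex ℝ D)
    (hDn : ∀ n, IsCompact (Dn n)) (hDnconv : ∀ n, Convex ℝ (Dn n))
    (hconv : Tendsto (fun n => Metric.hausdorffDist (Dn n) D) atTop (nhds 0))
    (x : EuclideanSpace ℝ (Fin 2)) (xn : ℕ → EuclideanSpace ℝ (Fin 2))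
    (hxn : ∀ n, xn n ∈ interior (Dn n)) (hx : x ∈ interior D)
    (hxconv : Tendsto xn atTop (nhds x))
    (y : EuclideanSpace ℝ (Fin 2)) (yn : ℕ → EuclideanSpace ℝ (Fin 2))
    (hyn : ∀ n, yn n ∈ Dn n) (hy : y ∈ D)
    (hyconv : Tendsto yn atTop (nhds y)) (hne : y ≠ x)
    (z : ℕ → EuclideanSpace ℝ (Fin 2)) (zD : EuclideanSpace ℝ (Fin 2))
    (hz : ∀ n, z n ∈ frontier (Dn n) ∧ yn n ∈ segment ℝ (xn n) (z n))
    (hzD : zD ∈ frontier D ∧ y ∈ segment ℝ x zD) :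
    Tendsto z atTop (nhds zD) :=
  radial_projection_continuous_general D Dn hD hDconv hDn hDnconv hconv x xn hx hxconv y yn hyconv
    hne z zD hz hzD
end
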